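/- arXiv:2507.10120 — 6 statements merged into one kernel-verified Lean document; each statement's English description precedes it below -/
import Mathlib

section
/- For γ ∈ [0,1) and any natural number H, ∑_{k=H}^∞ γ^k (k+1)² = (γ^H/(1-γ))·(H² + (2H-1)/(1-γ) + 2/(1-γ)²). -/
theorem geom_tail_k2 (γ : ℝ) (h0 : 0 ≤ γ) (h1 : γ < 1) (H : ℕ) :
    ∑' k : ℕ, γ ^ (H + k) * ((H : ℝ) + k + 1) ^ 2
      = γ ^ H / (1 - γ) *
        ((H : ℝ) ^ 2 + (2 * (H : ℝ) - 1) / (1 - γ) + 2 / (1 - γ) ^ 2) := by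
  have hγ : ‖γ‖ < 1 := by rwa [Real.norm_eq_abs, abs_of_nonneg h0]
  have hA : HasSum (fun n : ℕ ↦ γ ^ n) (1 / (1 - γ)) := by
    simpa [one_div] using hasSum_geometric_of_norm_lt_one hγ
  have hB := hasSum_coe_mul_geometric_of_norm_lt_one (𝕜 := ℝ) hγ
  have hC := hasSum_choose_mul_geometric_of_norm_lt_one (𝕜 := ℝ) 2 hγ
  have h := (((hC.mul_left 2).add (hB.mul_left (2 * (H : ℝ) - 1))).add
      (hA.mul_left ((H : ℝ) ^ 2 + 2 * H - 1))).mul_left (γ ^ H)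
  have heq : (fun k : ℕ ↦ γ ^ (H + k) * ((H : ℝ) + k + 1) ^ 2)
      = fun k : ℕ ↦ γ ^ H * (2 * (((k + 2).choose 2 : ℝ) * γ ^ k)
          + (2 * (H : ℝ) - 1) * ((k : ℝ) * γ ^ k)
          + ((H : ℝ) ^ 2 + 2 * H - 1) * γ ^ k) := by
    funext k
    have : (((k + 2).choose 2 : ℝ)) = ((k : ℝ) + 2) * ((k : ℝ) + 1) / 2 := by
      rw [Nat.cast_choose_two]
      push_cast
      ring
    rw [this, pow_add]
    ring
  rw [heq, h.tsum_eq]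
  have hne : (1 : ℝ) - γ ≠ 0 := by linarith
  field_simp
  ring
end

section
/- Let X₀, ..., X_k be independent mean-zero random vectors in ℝ^d with ‖X_i‖ ≤ G almost surely, and let S = ∑ X_i. Then for any unit vector y ∈ ℝ^d, the operator norm of E[(yᵀS)·S Sᵀ] is at most (k+1)²·G³. -/
/-!
Pointwise `‖(yᵀS) S Sᵀ‖ ≤ ‖S‖³ ≤ (k+1)G ‖S‖²`. The crude bound `‖S‖ ≤ (k+1)G` is spent only on
one factor: for the other two, independence and centring kill the cross terms of `E‖S‖²`, so
`E‖S‖² = ∑ E‖Xᵢ‖² ≤ (k+1)G²`.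
-/

open MeasureTheory ProbabilityTheory
open scoped RealInnerProductSpace

section Pointwise

variable {E : Type*} [NormedAddCommGroup E] [InnerProductSpace ℝ E]

lemma norm_inner_smul_smulRight_innerSL_le (y v : E) :
    ‖⟪y, v⟫ • (innerSL ℝ v).smulRight v‖ ≤ ‖y‖ * ‖v‖ ^ 3 :=
  calc ‖⟪y, v⟫ • (innerSL ℝ v).smulRight v‖
      ≤ ‖⟪y, v⟫‖ * (‖innerSL ℝ v‖ * ‖v‖) := by
        rw [norm_smul, ContinuousLinearMap.norm_smulRight_apply]
    _ ≤ (‖y‖ * ‖v‖) * (‖v‖ * ‖v‖) := by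
        gcongr
        · exact norm_inner_le_norm y v
        · exact (innerSL_apply_norm ℝ v).le
    _ = ‖y‖ * ‖v‖ ^ 3 := by ring

end Pointwise

section SecondMoment

variable {Ω E ι : Type*} [MeasurableSpace Ω] {μ : Measure Ω}
  [NormedAddCommGroup E] [InnerProductSpace ℝ E] [CompleteSpace E]
  [MeasurableSpace E] [BorelSpace E]

lemma ProbabilityTheory.IndepFun.integral_inner_eq_zero {X Y : Ω → E} (hXY : IndepFun X Y μ)
    (hX : Integrable X μ) (hY : Integrable Y μ) (hX0 : ∫ ω, X ω ∂μ = 0) :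
    ∫ ω, ⟪X ω, Y ω⟫ ∂μ = 0 :=
  (hXY.integral_bilin hX hY (innerSL ℝ)).trans (by simp [hX0])

lemma integral_norm_sum_sq_of_pairwise_indepFun [IsFiniteMeasure μ] {X : ι → Ω → E}
    (s : Finset ι) (hindep : Pairwise fun i j ↦ IndepFun (X i) (X j) μ)
    (hL2 : ∀ i, MemLp (X i) 2 μ) (hmean : ∀ i, ∫ ω, X i ω ∂μ = 0) :
    ∫ ω, ‖∑ i ∈ s, X i ω‖ ^ 2 ∂μ = ∑ i ∈ s, ∫ ω, ‖X i ω‖ ^ 2 ∂μ := by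
  have hint i : Integrable (X i) μ := (hL2 i).integrable one_le_two
  have hcross i j : Integrable (fun ω ↦ ⟪X i ω, X j ω⟫) μ := by
    obtain rfl | hij := eq_or_ne i j
    · simpa only [real_inner_self_eq_norm_sq] using (hL2 i).integrable_norm_pow'
    · exact (hindep hij).integrable_bilin (hint i) (hint j) (innerSL ℝ)
  have hexpand ω : ‖∑ i ∈ s, X i ω‖ ^ 2 = ∑ i ∈ s, ∑ j ∈ s, ⟪X i ω, X j ω⟫ := by
    rw [← real_inner_self_eq_norm_sq, sum_inner]
    simp only [inner_sum]
  simp_rw [hexpand]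
  rw [integral_finsetSum _ fun i _ ↦ integrable_finsetSum _ fun j _ ↦ hcross i j]
  refine Finset.sum_congr rfl fun i hi ↦ ?_
  rw [integral_finsetSum _ fun j _ ↦ hcross i j, Finset.sum_eq_single_of_mem i hi
    fun j _ hji ↦ (hindep hji.symm).integral_inner_eq_zero (hint i) (hint j) (hmean i)]
  simp only [real_inner_self_eq_norm_sq]

end SecondMoment

theorem third_moment_operator_bound_general (d k : ℕ) (G : ℝ) (hG : 0 < G)
    {Ω : Type*} [MeasurableSpace Ω] (μ : Measure Ω) [IsProbabilityMeasure μ]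
    (X : Fin (k + 1) → Ω → EuclideanSpace ℝ (Fin d))
    (hindep : ProbabilityTheory.iIndepFun X μ)
    (hint : ∀ i, Integrable (X i) μ)
    (hmean : ∀ i, ∫ ω, X i ω ∂μ = 0)
    (hbound : ∀ i, ∀ᵐ ω ∂μ, ‖X i ω‖ ≤ G)
    (y : EuclideanSpace ℝ (Fin d)) (hy : ‖y‖ = 1) :
    ‖∫ ω, ⟪y, ∑ i, X i ω⟫ •
        (innerSL ℝ (∑ i, X i ω)).smulRight (∑ i, X i ω) ∂μ‖
      ≤ ((k : ℝ) + 1) ^ 2 * G ^ 3 := by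
  have hL2 i : MemLp (X i) 2 μ := .of_bound (hint i).1 G (hbound i)
  have hsum_bound : ∀ᵐ ω ∂μ, ‖∑ i, X i ω‖ ≤ ((k : ℝ) + 1) * G := by
    filter_upwards [ae_all_iff.2 hbound] with ω hω
    simpa using norm_sum_le_of_le Finset.univ fun i _ ↦ hω i
  have hsecond : ∫ ω, ‖∑ i, X i ω‖ ^ 2 ∂μ ≤ ((k : ℝ) + 1) * G ^ 2 := by
    rw [integral_norm_sum_sq_of_pairwise_indepFun _ (fun i j ↦ hindep.indepFun) hL2 hmean]
    calc ∑ i, ∫ ω, ‖X i ω‖ ^ 2 ∂μ ≤ ∑ _i : Fin (k + 1), G ^ 2 := by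
          gcongr with i
          simpa using integral_mono_ae (hL2 i).integrable_norm_pow' (integrable_const (G ^ 2))
            (by filter_upwards [hbound i] with ω hω; gcongr)
      _ = ((k : ℝ) + 1) * G ^ 2 := by simp
  calc _ ≤ ∫ ω, ((k : ℝ) + 1) * G * ‖∑ i, X i ω‖ ^ 2 ∂μ := by
        refine norm_integral_le_of_norm_le
          ((memLp_finsetSum _ fun i _ ↦ hL2 i).integrable_norm_pow'.const_mul _) ?_
        filter_upwards [hsum_bound] with ω hω
        calc _ ≤ ‖y‖ * ‖∑ i, X i ω‖ ^ 3 := norm_inner_smul_smulRight_innerSL_le _ _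
          _ = ‖∑ i, X i ω‖ * ‖∑ i, X i ω‖ ^ 2 := by rw [hy]; ring
          _ ≤ _ := by gcongr
    _ ≤ ((k : ℝ) + 1) * G * (((k : ℝ) + 1) * G ^ 2) := by
        rw [integral_const_mul]
        gcongr
    _ = ((k : ℝ) + 1) ^ 2 * G ^ 3 := by ring

theorem third_moment_operator_bound (d k : ℕ) (hd : 0 < d) (G : ℝ) (hG : 0 < G)
    {Ω : Type*} [MeasurableSpace Ω] (μ : Measure Ω) [IsProbabilityMeasure μ]
    (X : Fin (k + 1) → Ω → EuclideanSpace ℝ (Fin d))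
    (hmeas : ∀ i, Measurable (X i))
    (hindep : ProbabilityTheory.iIndepFun X μ)
    (hint : ∀ i, Integrable (X i) μ)
    (hmean : ∀ i, ∫ ω, X i ω ∂μ = 0)
    (hbound : ∀ i, ∀ᵐ ω ∂μ, ‖X i ω‖ ≤ G)
    (y : EuclideanSpace ℝ (Fin d)) (hy : ‖y‖ = 1) :
    ‖∫ ω, ⟪y, ∑ i, X i ω⟫ •
        (innerSL ℝ (∑ i, X i ω)).smulRight (∑ i, X i ω) ∂μ‖
      ≤ ((k : ℝ) + 1) ^ 2 * G ^ 3 :=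
  third_moment_operator_bound_general d k G hG μ X hindep hint hmean hbound y hy
end

section
/- Let g ∈ ℝ^d, H a symmetric d×d matrix, M > 0, and let h* be a global minimizer of m(h) = gᵀh + (1/2)hᵀHh + (M/6)‖h‖³. Then the matrix H + (M/2)‖h*‖·I is positive semidefinite. -/
/-!
Minimality of `h*` along the line `t ↦ h* + t • v` gives, for `h* ≠ 0`, the first-order condition
`⟪g, v⟫ + (⟪h*, H v⟫ + ⟪v, H h*⟫) / 2 + (M/2)‖h*‖⟪h*, v⟫ = 0`. If `⟪h*, y⟫ ≠ 0`, the reflection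
of `h*` in `y⟂` is `h* + t • y` with `t = -2⟪h*, y⟫ / ‖y‖²`; it has the same norm as `h*`, so
comparing the model values there and at `h*` and eliminating the linear term by the first-order
condition leaves `t² / 2 · (⟪y, H y⟫ + (M/2)‖h*‖‖y‖²) ≥ 0`. Directions orthogonal to `h*` follow by continuity,
and for `h* = 0` comparing with `±t • y` gives `⟪y, H y⟫ + O(t) ≥ 0`.
-/

open scoped RealInnerProductSpace Topology
open Filter

section
variable {F : Type*} [NormedAddCommGroup F] [InnerProductSpace ℝ F]

theorem HasDerivAt.norm_pow_three {f : ℝ → F} {f' : F} {x : ℝ} (hf : HasDerivAt f f' x)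
    (h0 : f x ≠ 0) : HasDerivAt (‖f ·‖ ^ 3) (3 * ‖f x‖ * ⟪f x, f'⟫) x := by
  have hsqrt := (hf.norm_sq.sqrt (by positivity)).fun_pow 3
  simp only [Real.sqrt_sq (norm_nonneg _)] at hsqrt
  refine hsqrt.congr_deriv ?_
  have : ‖f x‖ ≠ 0 := norm_ne_zero_iff.mpr h0
  field_simp
  ring

theorem norm_add_smul_eq_norm {h y : F} {t : ℝ} (ht : t * ‖y‖ ^ 2 = -2 * ⟪h, y⟫) :
    ‖h + t • y‖ = ‖h‖ := by
  refine (sq_eq_sq₀ (norm_nonneg _) (norm_nonneg _)).mp ?_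
  rw [norm_add_sq_real, real_inner_smul_right, norm_smul, mul_pow, Real.norm_eq_abs, sq_abs]
  linear_combination t * ht

end

theorem nonneg_of_forall_pos_nonneg_add_mul {a b : ℝ} (h : ∀ t > 0, 0 ≤ a + b * t) : 0 ≤ a := by
  have hlim : Tendsto (fun t => a + b * t) (𝓝[>] 0) (𝓝 a) := by
    have hcont : Continuous fun t : ℝ => a + b * t := by fun_prop
    simpa using (hcont.tendsto 0).mono_left nhdsWithin_le_nhds
  exact ge_of_tendsto hlim (eventually_nhdsWithin_of_forall h)

section CubicModel

variable {E : Type*} [NormedAddCommGroup E] [InnerProductSpace ℝ E]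
  (g : E) (H : E →L[ℝ] E) (M : ℝ)

noncomputable def cubicModel (h : E) : ℝ :=
  ⟪g, h⟫ + (1 / 2) * ⟪h, H h⟫ + (M / 6) * ‖h‖ ^ 3

theorem cubicModel_add_smul (h v : E) (t : ℝ) :
    cubicModel g H M (h + t • v) = cubicModel g H M h + t * (⟪g, v⟫ + (⟪h, H v⟫ + ⟪v, H h⟫) / 2)
      + t ^ 2 / 2 * ⟪v, H v⟫ + M / 6 * (‖h + t • v‖ ^ 3 - ‖h‖ ^ 3) := by
  simp only [cubicModel, map_add, map_smul, inner_add_left, inner_add_right,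
    real_inner_smul_left, real_inner_smul_right]
  ring

theorem hasDerivAt_cubicModel_add_smul {h : E} (hh : h ≠ 0) (v : E) :
    HasDerivAt (fun t : ℝ => cubicModel g H M (h + t • v))
      (⟪g, v⟫ + (⟪h, H v⟫ + ⟪v, H h⟫) / 2 + M / 2 * ‖h‖ * ⟪h, v⟫) 0 := by
  have hline : HasDerivAt (fun t : ℝ => h + t • v) v 0 := by
    simpa using ((hasDerivAt_id (0 : ℝ)).smul_const v).const_add h
  have hlin := (hasDerivAt_const (0 : ℝ) g).inner ℝ hline
  have hquad := hline.inner ℝ (H.hasFDerivAt.comp_hasDerivAt 0 hline)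
  have hcube := hline.norm_pow_three (by simpa using hh)
  refine ((hlin.add (hquad.const_mul (1 / 2))).add (hcube.const_mul (M / 6))).congr_deriv ?_
  simp only [zero_smul, add_zero, inner_zero_left, Function.comp_apply]
  ring

variable {g H M}

theorem cubicModel_second_order_of_zero (hmin : ∀ h, cubicModel g H M 0 ≤ cubicModel g H M h)
    (y : E) : 0 ≤ ⟪y, H y⟫ := by
  refine nonneg_of_forall_pos_nonneg_add_mul (b := M / 3 * ‖y‖ ^ 3) fun t ht => ?_
  have hpos := hmin (t • y)
  have hneg := hmin ((-t) • y)
  simp only [cubicModel, inner_zero_right, map_zero, norm_zero, map_smul, real_inner_smul_left,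
    real_inner_smul_right, norm_smul, Real.norm_eq_abs, abs_neg, abs_of_pos ht] at hpos hneg
  have hsum : 0 ≤ t ^ 2 * (⟪y, H y⟫ + M / 3 * ‖y‖ ^ 3 * t) := by nlinarith
  exact nonneg_of_mul_nonneg_right hsum (by positivity)

variable {h₀ : E} (hmin : ∀ h, cubicModel g H M h₀ ≤ cubicModel g H M h)
include hmin

theorem cubicModel_first_order (hh₀ : h₀ ≠ 0) (v : E) :
    ⟪g, v⟫ + (⟪h₀, H v⟫ + ⟪v, H h₀⟫) / 2 + M / 2 * ‖h₀‖ * ⟪h₀, v⟫ = 0 := by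
  refine IsLocalMin.hasDerivAt_eq_zero (Eventually.of_forall fun t => ?_)
    (hasDerivAt_cubicModel_add_smul g H M hh₀ v)
  simpa using hmin (h₀ + t • v)

theorem cubicModel_second_order_of_inner_ne_zero {y : E} (hy : ⟪h₀, y⟫ ≠ 0) :
    0 ≤ ⟪y, H y⟫ + M / 2 * ‖h₀‖ * ‖y‖ ^ 2 := by
  have hh₀ : h₀ ≠ 0 := by rintro rfl; simp at hy
  have hy₀ : ‖y‖ ^ 2 ≠ 0 := by
    have : y ≠ 0 := by rintro rfl; simp at hy
    positivity
  set t := -2 * ⟪h₀, y⟫ / ‖y‖ ^ 2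
  have ht : t * ‖y‖ ^ 2 = -2 * ⟪h₀, y⟫ := div_mul_cancel₀ _ hy₀
  have ht₀ : t ≠ 0 := div_ne_zero (by simpa using hy) hy₀
  have hle := hmin (h₀ + t • y)
  rw [cubicModel_add_smul, norm_add_smul_eq_norm ht] at hle
  have hfoc := cubicModel_first_order hmin hh₀ y
  have hexpand : t ^ 2 * (⟪y, H y⟫ + M / 2 * ‖h₀‖ * ‖y‖ ^ 2)
      = 2 * (t * (⟪g, y⟫ + (⟪h₀, H y⟫ + ⟪y, H h₀⟫) / 2) + t ^ 2 / 2 * ⟪y, H y⟫) := by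
    linear_combination (M / 2 * ‖h₀‖ * t) * ht - 2 * t * hfoc
  refine nonneg_of_mul_nonneg_right ?_ (by positivity : (0 : ℝ) < t ^ 2)
  linarith

theorem cubicModel_second_order_of_ne_zero (hh₀ : h₀ ≠ 0) (x : E) :
    0 ≤ ⟪x, H x⟫ + M / 2 * ‖h₀‖ * ‖x‖ ^ 2 := by
  by_cases hx : ⟪h₀, x⟫ = 0
  swap
  · exact cubicModel_second_order_of_inner_ne_zero hmin hx
  have hq : Continuous fun y => ⟪y, H y⟫ + M / 2 * ‖h₀‖ * ‖y‖ ^ 2 := by fun_prop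
  have hlim : Tendsto (fun ε : ℝ => x + ε • h₀) (𝓝[≠] 0) (𝓝 x) := by
    have hcont : Continuous fun ε : ℝ => x + ε • h₀ := by fun_prop
    simpa using (hcont.tendsto 0).mono_left nhdsWithin_le_nhds
  refine ge_of_tendsto ((hq.tendsto x).comp hlim) (eventually_nhdsWithin_of_forall fun ε hε => ?_)
  refine cubicModel_second_order_of_inner_ne_zero hmin ?_
  rw [inner_add_right, hx, real_inner_smul_right, real_inner_self_eq_norm_sq, zero_add]
  exact mul_ne_zero hε (by positivity)

end CubicModel

theorem cubic_second_order_optimality_general (d : ℕ)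
    (g : EuclideanSpace ℝ (Fin d))
    (H : EuclideanSpace ℝ (Fin d) →L[ℝ] EuclideanSpace ℝ (Fin d))
    (M : ℝ)
    (hstar : EuclideanSpace ℝ (Fin d))
    (hmin : ∀ h : EuclideanSpace ℝ (Fin d),
      ⟪g, hstar⟫ + (1 / 2) * ⟪hstar, H hstar⟫ + (M / 6) * ‖hstar‖ ^ 3
        ≤ ⟪g, h⟫ + (1 / 2) * ⟪h, H h⟫ + (M / 6) * ‖h‖ ^ 3) :
    ∀ x : EuclideanSpace ℝ (Fin d),
      0 ≤ ⟪x, H x⟫ + (M / 2) * ‖hstar‖ * ‖x‖ ^ 2 := by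
  rcases eq_or_ne hstar 0 with rfl | hstar₀
  · simpa using cubicModel_second_order_of_zero hmin
  · exact cubicModel_second_order_of_ne_zero hmin hstar₀

theorem cubic_second_order_optimality (d : ℕ) (hd : 0 < d)
    (g : EuclideanSpace ℝ (Fin d))
    (H : EuclideanSpace ℝ (Fin d) →L[ℝ] EuclideanSpace ℝ (Fin d))
    (hH : IsSelfAdjoint H) (M : ℝ) (hM : 0 < M)
    (hstar : EuclideanSpace ℝ (Fin d))
    (hmin : ∀ h : EuclideanSpace ℝ (Fin d),
      ⟪g, hstar⟫ + (1 / 2) * ⟪hstar, H hstar⟫ + (M / 6) * ‖hstar‖ ^ 3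
        ≤ ⟪g, h⟫ + (1 / 2) * ⟪h, H h⟫ + (M / 6) * ‖h‖ ^ 3) :
    ∀ x : EuclideanSpace ℝ (Fin d),
      0 ≤ ⟪x, H x⟫ + (M / 2) * ‖hstar‖ * ‖x‖ ^ 2 :=
  cubic_second_order_optimality_general d g H M hstar hmin
end

section
/- Let g ∈ ℝ^d, H a symmetric d×d matrix, M > 0, and let h* be a global minimizer of m(h) = gᵀh + (1/2)hᵀHh + (M/6)‖h‖³. Then m(h*) ≤ -(M/12)‖h*‖³. -/
/-!
Along the ray `t ↦ t • h*` the model is `φ t = t a + t² b / 2 + |t|³ c` with `a = ⟪g, h*⟫`,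
`b = ⟪h*, H h*⟫`, `c = M ‖h*‖³ / 6`, and `t = 1` minimizes it. Comparing with `t = -1` gives
`a ≤ 0`, stationarity at `t = 1` gives `a + b + 3 c = 0`, and eliminating `b`,
`φ 1 = (a - c) / 2 ≤ -c / 2`.
-/

open scoped RealInnerProductSpace

theorem cubic_ray_value_le_of_min_at_one (a b c : ℝ)
    (hmin : ∀ t : ℝ, a + 1 / 2 * b + c ≤ t * a + 1 / 2 * (t ^ 2 * b) + |t| ^ 3 * c) :
    a + 1 / 2 * b + c ≤ -(1 / 2 * c) := by
  have ha : a ≤ 0 := by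
    have := hmin (-1)
    norm_num at this
    linarith
  have hcrit : a + b + 3 * c = 0 := by
    set p : ℝ → ℝ := fun t => t * a + 1 / 2 * (t ^ 2 * b) + t ^ 3 * c
    -- `|t|³ = t³` near `t = 1`
    have hloc : IsLocalMin p 1 := by
      filter_upwards [Ioi_mem_nhds one_pos] with t (ht : 0 < t)
      simpa [p, abs_of_pos ht] using hmin t
    have hderiv : HasDerivAt p (a + b + 3 * c) 1 := by
      have := (((hasDerivAt_id (1 : ℝ)).mul_const a).add
        (((hasDerivAt_pow 2 (1 : ℝ)).mul_const b).const_mul (1 / 2))).add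
        ((hasDerivAt_pow 3 (1 : ℝ)).mul_const c)
      exact this.congr_deriv (by norm_num; ring)
    exact hloc.hasDerivAt_eq_zero hderiv
  linarith

theorem cubic_model_smul {E : Type*} [NormedAddCommGroup E] [InnerProductSpace ℝ E]
    (g h : E) (H : E →L[ℝ] E) (M t : ℝ) :
    ⟪g, t • h⟫ + 1 / 2 * ⟪t • h, H (t • h)⟫ + M / 6 * ‖t • h‖ ^ 3
      = t * ⟪g, h⟫ + 1 / 2 * (t ^ 2 * ⟪h, H h⟫) + |t| ^ 3 * (M / 6 * ‖h‖ ^ 3) := by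
  simp only [map_smul, real_inner_smul_left, real_inner_smul_right, norm_smul, Real.norm_eq_abs]
  ring

theorem cubic_model_descent_general (d : ℕ)
    (g : EuclideanSpace ℝ (Fin d))
    (H : EuclideanSpace ℝ (Fin d) →L[ℝ] EuclideanSpace ℝ (Fin d))
    (M : ℝ)
    (hstar : EuclideanSpace ℝ (Fin d))
    (hmin : ∀ h : EuclideanSpace ℝ (Fin d),
      ⟪g, hstar⟫ + (1 / 2) * ⟪hstar, H hstar⟫ + (M / 6) * ‖hstar‖ ^ 3
        ≤ ⟪g, h⟫ + (1 / 2) * ⟪h, H h⟫ + (M / 6) * ‖h‖ ^ 3) :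
    ⟪g, hstar⟫ + (1 / 2) * ⟪hstar, H hstar⟫ + (M / 6) * ‖hstar‖ ^ 3
      ≤ -(M / 12) * ‖hstar‖ ^ 3 := by
  have hray (t : ℝ) := cubic_model_smul g hstar H M t ▸ hmin (t • hstar)
  have := cubic_ray_value_le_of_min_at_one _ _ _ hray
  linarith

theorem cubic_model_descent (d : ℕ) (hd : 0 < d)
    (g : EuclideanSpace ℝ (Fin d))
    (H : EuclideanSpace ℝ (Fin d) →L[ℝ] EuclideanSpace ℝ (Fin d))
    (hH : IsSelfAdjoint H) (M : ℝ) (hM : 0 < M)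
    (hstar : EuclideanSpace ℝ (Fin d))
    (hmin : ∀ h : EuclideanSpace ℝ (Fin d),
      ⟪g, hstar⟫ + (1 / 2) * ⟪hstar, H hstar⟫ + (M / 6) * ‖hstar‖ ^ 3
        ≤ ⟪g, h⟫ + (1 / 2) * ⟪h, H h⟫ + (M / 6) * ‖h‖ ^ 3) :
    ⟪g, hstar⟫ + (1 / 2) * ⟪hstar, H hstar⟫ + (M / 6) * ‖hstar‖ ^ 3
      ≤ -(M / 12) * ‖hstar‖ ^ 3 :=
  cubic_model_descent_general d g H M hstar hmin
end

section
/- Let J : ℝ^d → ℝ be twice continuously differentiable with ‖∇²J(x) - ∇²J(y)‖ ≤ L₃‖x - y‖ for all x, y. Let θ, h ∈ ℝ^d, g ∈ ℝ^d, H a symmetric matrix, and M > 0, such that ‖g - ∇J(θ)‖ ≤ ε, ‖H - ∇²J(θ)‖ ≤ √(L₃ε), g + Hh + (M/2)‖h‖h = 0, ‖h‖ ≤ (1/2)√(ε/L₃), and M = 30L₃. Then ‖∇J(θ + h)‖ ≤ 6ε. -/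
/-!
Write `∇J(θ + h) = R + (∇J(θ) - g) + (∇²J(θ) - H) h - (M/2)‖h‖ h` using the step equation, where
`R` is the second-order Taylor remainder. The Lipschitz Hessian gives `‖R‖ ≤ (L₃/2)‖h‖²`, and
`‖h‖ ≤ ½√(ε/L₃)` turns `L₃‖h‖²` into at most `ε/4` and `√(L₃ε)‖h‖` into at most `ε/2`, so the four
terms add up to at most `ε/8 + ε + ε/2 + 15ε/4 ≤ 6ε`.
-/

open scoped RealInnerProductSpace

section Taylor

variable {E F : Type*} [NormedAddCommGroup E] [NormedSpace ℝ E]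
  [NormedAddCommGroup F] [NormedSpace ℝ F]

theorem norm_image_add_sub_sub_fderiv_le_of_lipschitz_fderiv {f : E → F}
    {f' : E → E →L[ℝ] F} {L : ℝ} (hf : ∀ x, HasFDerivAt f (f' x) x)
    (hL : ∀ x y, ‖f' x - f' y‖ ≤ L * ‖x - y‖) (x h : E) :
    ‖f (x + h) - f x - f' x h‖ ≤ L / 2 * ‖h‖ ^ 2 := by
  set φ : ℝ → F := fun t => f (x + t • h) - f x - t • f' x h with hφ
  have hφ' : ∀ t : ℝ, HasDerivAt φ (f' (x + t • h) h - f' x h) t := by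
    intro t
    have hline : HasDerivAt (fun t : ℝ => x + t • h) h t := by
      simpa using ((hasDerivAt_id t).smul_const h).const_add x
    have hlin : HasDerivAt (fun t : ℝ => t • f' x h) (f' x h) t := by
      simpa using (hasDerivAt_id t).smul_const (f' x h)
    exact (((hf _).comp_hasDerivAt t hline).sub_const (f x)).sub hlin
  have hbound : ∀ t : ℝ,
      HasDerivAt (fun t : ℝ => L / 2 * ‖h‖ ^ 2 * t ^ 2) (L * ‖h‖ ^ 2 * t) t := by
    intro t
    refine ((hasDerivAt_pow 2 t).const_mul (L / 2 * ‖h‖ ^ 2)).congr_deriv ?_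
    norm_num
    ring
  have hφ'_le : ∀ t ∈ Set.Ico (0 : ℝ) 1, ‖f' (x + t • h) h - f' x h‖ ≤ L * ‖h‖ ^ 2 * t := by
    intro t ht
    calc ‖f' (x + t • h) h - f' x h‖ ≤ ‖f' (x + t • h) - f' x‖ * ‖h‖ := by
          rw [← sub_apply]
          exact ContinuousLinearMap.le_opNorm _ h
      _ ≤ L * ‖t • h‖ * ‖h‖ := by
          gcongr
          simpa using hL (x + t • h) x
      _ = L * ‖h‖ ^ 2 * t := by
          rw [norm_smul, Real.norm_of_nonneg ht.1]
          ring
  have := image_norm_le_of_norm_deriv_right_le_deriv_boundary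
    (fun t _ => (hφ' t).continuousAt.continuousWithinAt) (fun t _ => (hφ' t).hasDerivWithinAt)
    (by simp [hφ]) hbound hφ'_le (Set.right_mem_Icc.mpr zero_le_one)
  simpa [hφ] using this

end Taylor

theorem norm_le_of_regularized_newton_step {E : Type*} [NormedAddCommGroup E]
    [NormedSpace ℝ E] (G₁ G₀ g h : E) (A H : E →L[ℝ] E) (c : ℝ)
    (hstep : g + H h + c • h = 0) :
    ‖G₁‖ ≤ ‖G₁ - G₀ - A h‖ + ‖G₀ - g‖ + ‖H - A‖ * ‖h‖ + |c| * ‖h‖ := by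
  have hdecomp : G₁ = (G₁ - G₀ - A h) + (G₀ - g) + (A - H) h - c • h := by
    rw [sub_apply]
    linear_combination (norm := module) hstep
  calc ‖G₁‖ = ‖(G₁ - G₀ - A h) + (G₀ - g) + (A - H) h - c • h‖ := by rw [← hdecomp]
    _ ≤ ‖G₁ - G₀ - A h‖ + ‖G₀ - g‖ + ‖(A - H) h‖ + ‖c • h‖ := norm_sub_le_of_le
        norm_add₃_le le_rfl
    _ ≤ ‖G₁ - G₀ - A h‖ + ‖G₀ - g‖ + ‖H - A‖ * ‖h‖ + |c| * ‖h‖ := by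
        rw [norm_smul, Real.norm_eq_abs, norm_sub_rev H]
        gcongr
        exact (A - H).le_opNorm h

section StepLength

variable {ε L r : ℝ}

theorem mul_sq_le_of_le_half_sqrt_div (hε : 0 ≤ ε) (hL : 0 < L) (hr : 0 ≤ r)
    (hrε : r ≤ 1 / 2 * √(ε / L)) : L * r ^ 2 ≤ ε / 4 := by
  have hsq : r ^ 2 ≤ (1 / 2 * √(ε / L)) ^ 2 := pow_le_pow_left₀ hr hrε 2
  rw [mul_pow, Real.sq_sqrt (by positivity)] at hsq
  calc L * r ^ 2 ≤ L * ((1 / 2) ^ 2 * (ε / L)) := by gcongr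
    _ = ε / 4 := by field_simp; ring

theorem sqrt_mul_mul_le_of_le_half_sqrt_div (hε : 0 ≤ ε) (hL : 0 < L)
    (hrε : r ≤ 1 / 2 * √(ε / L)) : √(L * ε) * r ≤ ε / 2 := by
  have hprod : √(L * ε) * √(ε / L) = ε := by
    rw [← Real.sqrt_mul (by positivity), show L * ε * (ε / L) = ε ^ 2 by field_simp]
    exact Real.sqrt_sq hε
  calc √(L * ε) * r ≤ √(L * ε) * (1 / 2 * √(ε / L)) := by gcongr
    _ = ε / 2 := by linear_combination hprod / 2

end StepLength

theorem grad_bound_at_next_iterate_general (d : ℕ) (ε L₃ : ℝ)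
    (hε : 0 < ε) (hL : 0 < L₃)
    (J : EuclideanSpace ℝ (Fin d) → ℝ)
    (Hess : EuclideanSpace ℝ (Fin d) →
      EuclideanSpace ℝ (Fin d) →L[ℝ] EuclideanSpace ℝ (Fin d))
    (hHess : ∀ x, HasFDerivAt (gradient J) (Hess x) x)
    (hLip : ∀ x y, ‖Hess x - Hess y‖ ≤ L₃ * ‖x - y‖)
    (θ h g : EuclideanSpace ℝ (Fin d))
    (H : EuclideanSpace ℝ (Fin d) →L[ℝ] EuclideanSpace ℝ (Fin d))
    (M : ℝ) (hM : M = 30 * L₃)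
    (hg : ‖g - gradient J θ‖ ≤ ε)
    (hHerr : ‖H - Hess θ‖ ≤ Real.sqrt (L₃ * ε))
    (hfoc : g + H h + ((M / 2) * ‖h‖) • h = 0)
    (hsmall : ‖h‖ ≤ (1 / 2) * Real.sqrt (ε / L₃)) :
    ‖gradient J (θ + h)‖ ≤ 6 * ε := by
  have hquad := mul_sq_le_of_le_half_sqrt_div hε.le hL (norm_nonneg h) hsmall
  have hcross := sqrt_mul_mul_le_of_le_half_sqrt_div hε.le hL hsmall
  have htaylor := norm_image_add_sub_sub_fderiv_le_of_lipschitz_fderiv hHess hLip θ h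
  have hreg : |M / 2 * ‖h‖| * ‖h‖ = 15 * (L₃ * ‖h‖ ^ 2) := by
    rw [abs_of_nonneg (by rw [hM]; positivity), hM]
    ring
  calc ‖gradient J (θ + h)‖
      ≤ ‖gradient J (θ + h) - gradient J θ - Hess θ h‖ + ‖gradient J θ - g‖
        + ‖H - Hess θ‖ * ‖h‖ + |M / 2 * ‖h‖| * ‖h‖ :=
        norm_le_of_regularized_newton_step _ _ _ _ _ _ _ hfoc
    _ ≤ L₃ / 2 * ‖h‖ ^ 2 + ε + √(L₃ * ε) * ‖h‖ + 15 * (L₃ * ‖h‖ ^ 2) := by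
        rw [hreg, norm_sub_rev (gradient J θ) g]
        gcongr
    _ ≤ 6 * ε := by linarith

theorem grad_bound_at_next_iterate (d : ℕ) (hd : 0 < d) (ε L₃ : ℝ)
    (hε : 0 < ε) (hL : 0 < L₃)
    (J : EuclideanSpace ℝ (Fin d) → ℝ) (hJ : ContDiff ℝ 2 J)
    (Hess : EuclideanSpace ℝ (Fin d) →
      EuclideanSpace ℝ (Fin d) →L[ℝ] EuclideanSpace ℝ (Fin d))
    (hHess : ∀ x, HasFDerivAt (gradient J) (Hess x) x)
    (hLip : ∀ x y, ‖Hess x - Hess y‖ ≤ L₃ * ‖x - y‖)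
    (θ h g : EuclideanSpace ℝ (Fin d))
    (H : EuclideanSpace ℝ (Fin d) →L[ℝ] EuclideanSpace ℝ (Fin d))
    (hHsym : IsSelfAdjoint H) (M : ℝ) (hM : M = 30 * L₃)
    (hg : ‖g - gradient J θ‖ ≤ ε)
    (hHerr : ‖H - Hess θ‖ ≤ Real.sqrt (L₃ * ε))
    (hfoc : g + H h + ((M / 2) * ‖h‖) • h = 0)
    (hsmall : ‖h‖ ≤ (1 / 2) * Real.sqrt (ε / L₃)) :
    ‖gradient J (θ + h)‖ ≤ 6 * ε :=
  grad_bound_at_next_iterate_general d ε L₃ hε hL J Hess hHess hLip θ h g H M hM hg hHerr hfoc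
    hsmall
end

section
/- Let J : ℝ^d → ℝ be twice continuously differentiable with L₃-Lipschitz Hessian. Let θ, h ∈ ℝ^d and H a symmetric matrix with ‖H - ∇²J(θ)‖ ≤ √(L₃ε), H + (M/2)‖h‖I ⪰ 0, ‖h‖ ≤ (1/2)√(ε/L₃), and M = 30L₃. Then λ_min(∇²J(θ + h)) ≥ -9√(L₃ε). -/
open scoped RealInnerProductSpace

/-! Write `Hess (θ + h) = H + (Hess (θ + h) - H)`. The quadratic form of `H` is at least
`-15 L₃ ‖h‖ ‖x‖²`, and the perturbation has operator norm at most `L₃ ‖h‖ + √(L₃ ε)` by the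
Lipschitz bound and the approximation error. Since `L₃ ‖h‖ ≤ √(L₃ ε) / 2`, the total loss is at most
`16 L₃ ‖h‖ + √(L₃ ε) ≤ 9 √(L₃ ε)`. -/

theorem Real.mul_sqrt_div_eq_sqrt_mul {a : ℝ} (ha : 0 ≤ a) (b : ℝ) : a * √(b / a) = √(a * b) := by
  rcases ha.eq_or_lt with rfl | ha
  · simp
  · rw [← Real.sqrt_sq ha.le, ← Real.sqrt_mul (sq_nonneg a), Real.sqrt_sq ha.le]
    congr 1
    field_simp

theorem ContinuousLinearMap.inner_apply_self_ge_of_norm_sub_le {E : Type*} [NormedAddCommGroup E]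
    [InnerProductSpace ℝ E] {T A : E →L[ℝ] E} {δ : ℝ} (hTA : ‖T - A‖ ≤ δ) (x : E) :
    ⟪x, A x⟫ - δ * ‖x‖ ^ 2 ≤ ⟪x, T x⟫ := by
  have hbound : |⟪x, (T - A) x⟫| ≤ δ * ‖x‖ ^ 2 :=
    calc |⟪x, (T - A) x⟫| ≤ ‖x‖ * ‖(T - A) x‖ := abs_real_inner_le_norm _ _
      _ ≤ ‖x‖ * (δ * ‖x‖) := by gcongr; exact (T - A).le_of_opNorm_le hTA x
      _ = δ * ‖x‖ ^ 2 := by ring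
  rw [sub_apply, inner_sub_right] at hbound
  linarith [(abs_le.mp hbound).1]

theorem hessian_lower_bound_at_next_iterate_general (d : ℕ) (ε L₃ : ℝ)
    (hL : 0 < L₃)
    (Hess : EuclideanSpace ℝ (Fin d) →
      EuclideanSpace ℝ (Fin d) →L[ℝ] EuclideanSpace ℝ (Fin d))
    (hLip : ∀ x y, ‖Hess x - Hess y‖ ≤ L₃ * ‖x - y‖)
    (θ h : EuclideanSpace ℝ (Fin d))
    (H : EuclideanSpace ℝ (Fin d) →L[ℝ] EuclideanSpace ℝ (Fin d))
    (M : ℝ) (hM : M = 30 * L₃)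
    (hHerr : ‖H - Hess θ‖ ≤ Real.sqrt (L₃ * ε))
    (hpsd : ∀ x : EuclideanSpace ℝ (Fin d),
      0 ≤ ⟪x, H x⟫ + (M / 2) * ‖h‖ * ‖x‖ ^ 2)
    (hsmall : ‖h‖ ≤ (1 / 2) * Real.sqrt (ε / L₃)) :
    ∀ x : EuclideanSpace ℝ (Fin d),
      ⟪x, Hess (θ + h) x⟫ ≥ -(9 * Real.sqrt (L₃ * ε)) * ‖x‖ ^ 2 := by
  intro x
  have hstep : L₃ * ‖h‖ ≤ Real.sqrt (L₃ * ε) / 2 := by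
    rw [← Real.mul_sqrt_div_eq_sqrt_mul hL.le]
    nlinarith [mul_le_mul_of_nonneg_left hsmall hL.le]
  have hperturb : ‖Hess (θ + h) - H‖ ≤ L₃ * ‖h‖ + Real.sqrt (L₃ * ε) :=
    calc ‖Hess (θ + h) - H‖ ≤ ‖Hess (θ + h) - Hess θ‖ + ‖Hess θ - H‖ :=
          norm_sub_le_norm_sub_add_norm_sub _ _ _
      _ ≤ L₃ * ‖h‖ + Real.sqrt (L₃ * ε) := by
        gcongr
        · simpa using hLip (θ + h) θ
        · rwa [norm_sub_rev]
  have hquad := ContinuousLinearMap.inner_apply_self_ge_of_norm_sub_le hperturb x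
  subst hM
  nlinarith [hpsd x, mul_le_mul_of_nonneg_right hstep (sq_nonneg ‖x‖)]

theorem hessian_lower_bound_at_next_iterate (d : ℕ) (hd : 0 < d) (ε L₃ : ℝ)
    (hε : 0 < ε) (hL : 0 < L₃)
    (J : EuclideanSpace ℝ (Fin d) → ℝ) (hJ : ContDiff ℝ 2 J)
    (Hess : EuclideanSpace ℝ (Fin d) →
      EuclideanSpace ℝ (Fin d) →L[ℝ] EuclideanSpace ℝ (Fin d))
    (hHess : ∀ x, HasFDerivAt (gradient J) (Hess x) x)
    (hLip : ∀ x y, ‖Hess x - Hess y‖ ≤ L₃ * ‖x - y‖)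
    (θ h : EuclideanSpace ℝ (Fin d))
    (H : EuclideanSpace ℝ (Fin d) →L[ℝ] EuclideanSpace ℝ (Fin d))
    (hHsym : IsSelfAdjoint H) (M : ℝ) (hM : M = 30 * L₃)
    (hHerr : ‖H - Hess θ‖ ≤ Real.sqrt (L₃ * ε))
    (hpsd : ∀ x : EuclideanSpace ℝ (Fin d),
      0 ≤ ⟪x, H x⟫ + (M / 2) * ‖h‖ * ‖x‖ ^ 2)
    (hsmall : ‖h‖ ≤ (1 / 2) * Real.sqrt (ε / L₃)) :
    ∀ x : EuclideanSpace ℝ (Fin d),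
      ⟪x, Hess (θ + h) x⟫ ≥ -(9 * Real.sqrt (L₃ * ε)) * ‖x‖ ^ 2 :=
  hessian_lower_bound_at_next_iterate_general d ε L₃ hL Hess hLip θ h H M hM hHerr hpsd hsmall
end
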